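/- Define κ₁(P₁) = 1 − a₂(P₁)·γ(h₂P) and κ₂(P₁) = a₁(P₁)·γ(h₁P). Then for h₁ > h₂ > 0 and P > 0, κ₁ and κ₂ are strictly increasing on [0,P], κ₁(P₁) ∈ [0,1) and κ₂(P₁) ∈ (0,1] for all P₁ ∈ [0,P]. -/

import Mathlib

/-!
Write `D = r̃₂ + g·r̃₁` for the common denominator of `a₁` and `a₂`, so that
`κ₁ = 1 - γ(h₂P)/D` and `κ₂ = γ(h₁P)/(D/g)`. The one identity behind everything is that the
marginal rates balance: `g·r̃₁' = -r̃₂'`. Hence `D' = g'·r̃₁ > 0` and `(D/g)' = -g'·r̃₂/g² < 0`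
on `(0, P)`, because `g' > 0` exactly when `h₁ > h₂`. The endpoint values `D(0) = γ(h₂P)` and
`D(P)/g(P) = γ(h₁P)` give `κ₁(0) = 0` and `κ₂(P) = 1`.
-/

noncomputable def γ (x : ℝ) : ℝ := Real.logb 2 (1 + x) / 2

open Real Set

lemma γ_zero : γ 0 = 0 := by
  simp [γ]

lemma γ_nonneg {x : ℝ} (hx : 0 ≤ x) : 0 ≤ γ x :=
  div_nonneg (logb_nonneg one_lt_two (by linarith)) zero_le_two

lemma γ_pos {x : ℝ} (hx : 0 < x) : 0 < γ x :=
  div_pos (logb_pos one_lt_two (by linarith)) zero_lt_two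

lemma γ_lt_γ {x y : ℝ} (hx : -1 < x) (hxy : x < y) : γ x < γ y :=
  div_lt_div_of_pos_right (logb_lt_logb one_lt_two (by linarith) (by linarith)) zero_lt_two

lemma hasDerivAt_γ_mul (h : ℝ) {x : ℝ} (hx : 0 < 1 + h * x) :
    HasDerivAt (fun t => γ (h * t)) (h / (2 * log 2 * (1 + h * x))) x := by
  have hlog : HasDerivAt (fun t => log (1 + h * t)) (h / (1 + h * x)) x :=
    ((((hasDerivAt_id' x).const_mul h).const_add 1).congr_deriv (mul_one h)).log hx.ne'
  refine ((hlog.div_const (log 2)).div_const 2).congr_deriv ?_ |>.congr_of_eventuallyEq ?_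
  · field_simp
  · exact Filter.Eventually.of_forall fun t => by simp only [γ, logb]

lemma StrictMonoOn.const_div_strictAntiOn {f : ℝ → ℝ} {s : Set ℝ} {c : ℝ} (hf : StrictMonoOn f s)
    (hpos : ∀ x ∈ s, 0 < f x) (hc : 0 < c) : StrictAntiOn (fun x => c / f x) s :=
  fun _ ha _ hb hab => div_lt_div_of_pos_left hc (hpos _ ha) (hf ha hb hab)

lemma StrictAntiOn.const_div_strictMonoOn {f : ℝ → ℝ} {s : Set ℝ} {c : ℝ} (hf : StrictAntiOn f s)
    (hpos : ∀ x ∈ s, 0 < f x) (hc : 0 < c) : StrictMonoOn (fun x => c / f x) s :=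
  fun _ ha _ hb hab => div_lt_div_of_pos_left hc (hpos _ hb) (hf ha hb hab)

section TangentCoefficients

variable {h₁ h₂ : ℝ}

noncomputable def gainRatio (h₁ h₂ t : ℝ) : ℝ := (1 / h₁ + t) / (1 / h₂ + t)

noncomputable def gainRatioDeriv (h₁ h₂ t : ℝ) : ℝ := (1 / h₂ - 1 / h₁) / (1 / h₂ + t) ^ 2

/-- The common denominator `r̃₂ + g·r̃₁` of the coefficients `a₁` and `a₂`. -/
noncomputable def rateDenom (h₁ h₂ P t : ℝ) : ℝ :=
  γ (h₂ * P) - γ (h₂ * t) + gainRatio h₁ h₂ t * γ (h₁ * t)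

lemma gainRatio_pos (hh₁ : 0 < h₁) (hh₂ : 0 < h₂) {t : ℝ} (ht : 0 ≤ t) : 0 < gainRatio h₁ h₂ t :=
  div_pos (by positivity) (by positivity)

lemma gainRatioDeriv_pos (hh : h₂ < h₁) (hh₂ : 0 < h₂) {t : ℝ} (ht : 0 ≤ t) :
    0 < gainRatioDeriv h₁ h₂ t :=
  div_pos (sub_pos.2 (one_div_lt_one_div_of_lt hh₂ hh)) (by positivity)

lemma hasDerivAt_gainRatio (hh₂ : 0 < h₂) {t : ℝ} (ht : 0 ≤ t) :
    HasDerivAt (gainRatio h₁ h₂) (gainRatioDeriv h₁ h₂ t) t := by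
  have hden : 1 / h₂ + t ≠ 0 := by positivity
  refine (((hasDerivAt_id' t).const_add _).div ((hasDerivAt_id' t).const_add _) hden).congr_deriv ?_
  simp only [gainRatioDeriv]
  ring

lemma gainRatio_mul_rate_deriv (hh₁ : 0 < h₁) (hh₂ : 0 < h₂) {t : ℝ} (ht : 0 ≤ t) :
    gainRatio h₁ h₂ t * (h₁ / (2 * log 2 * (1 + h₁ * t))) = h₂ / (2 * log 2 * (1 + h₂ * t)) := by
  have : 0 < log 2 := log_pos one_lt_two
  have : 0 < 1 + h₁ * t := by positivity
  have : 0 < 1 + h₂ * t := by positivity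
  unfold gainRatio
  field_simp

variable {P : ℝ}

lemma rateDenom_zero : rateDenom h₁ h₂ P 0 = γ (h₂ * P) := by
  simp [rateDenom, γ_zero]

lemma rateDenom_pos (hh₁ : 0 < h₁) (hh₂ : 0 < h₂) (hP : 0 < P) {t : ℝ} (ht : t ∈ Icc 0 P) :
    0 < rateDenom h₁ h₂ P t := by
  have hg := gainRatio_pos hh₁ hh₂ ht.1
  rcases ht.2.lt_or_eq with htP | rfl
  · have hr₂ : γ (h₂ * t) < γ (h₂ * P) :=
      γ_lt_γ (by nlinarith [ht.1]) (mul_lt_mul_of_pos_left htP hh₂)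
    have hr₁ := mul_nonneg hg.le (γ_nonneg (mul_nonneg hh₁.le ht.1))
    unfold rateDenom; linarith
  · have hr₁ := mul_pos hg (γ_pos (mul_pos hh₁ hP))
    unfold rateDenom; linarith

lemma hasDerivAt_rateDenom (hh₁ : 0 < h₁) (hh₂ : 0 < h₂) {t : ℝ} (ht : 0 ≤ t) :
    HasDerivAt (rateDenom h₁ h₂ P) (gainRatioDeriv h₁ h₂ t * γ (h₁ * t)) t := by
  have hr₁ := hasDerivAt_γ_mul h₁ (x := t) (by positivity)
  have hr₂ := hasDerivAt_γ_mul h₂ (x := t) (by positivity)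
  refine ((hr₂.const_sub _).add ((hasDerivAt_gainRatio hh₂ ht).mul hr₁)).congr_deriv ?_
  rw [gainRatio_mul_rate_deriv hh₁ hh₂ ht]
  ring

lemma rateDenom_strictMonoOn (hh : h₂ < h₁) (hh₂ : 0 < h₂) :
    StrictMonoOn (rateDenom h₁ h₂ P) (Ici 0) := by
  refine strictMonoOn_of_hasDerivWithinAt_pos (f' := fun t => gainRatioDeriv h₁ h₂ t * γ (h₁ * t))
    (convex_Ici 0)
    (fun t ht => (hasDerivAt_rateDenom (hh₂.trans hh) hh₂ ht).continuousAt.continuousWithinAt)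
    (fun t ht => ?_) (fun t ht => ?_)
  all_goals rw [interior_Ici] at ht
  · exact (hasDerivAt_rateDenom (hh₂.trans hh) hh₂ (le_of_lt ht)).hasDerivWithinAt
  · exact mul_pos (gainRatioDeriv_pos hh hh₂ (le_of_lt ht)) (γ_pos (mul_pos (hh₂.trans hh) ht))

lemma hasDerivAt_rateDenom_div_gainRatio (hh₁ : 0 < h₁) (hh₂ : 0 < h₂) {t : ℝ} (ht : 0 ≤ t) :
    HasDerivAt (fun s => rateDenom h₁ h₂ P s / gainRatio h₁ h₂ s)
      (-(gainRatioDeriv h₁ h₂ t * (γ (h₂ * P) - γ (h₂ * t))) / gainRatio h₁ h₂ t ^ 2) t := by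
  have hg := (gainRatio_pos hh₁ hh₂ ht).ne'
  refine ((hasDerivAt_rateDenom hh₁ hh₂ ht).div (hasDerivAt_gainRatio hh₂ ht) hg).congr_deriv ?_
  simp only [rateDenom]
  ring

lemma rateDenom_div_gainRatio_strictAntiOn (hh : h₂ < h₁) (hh₂ : 0 < h₂) :
    StrictAntiOn (fun t => rateDenom h₁ h₂ P t / gainRatio h₁ h₂ t) (Icc 0 P) := by
  refine strictAntiOn_of_hasDerivWithinAt_neg (convex_Icc 0 P)
    (f' := fun t => -(gainRatioDeriv h₁ h₂ t * (γ (h₂ * P) - γ (h₂ * t))) / gainRatio h₁ h₂ t ^ 2)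
    (fun t ht => (hasDerivAt_rateDenom_div_gainRatio (hh₂.trans hh) hh₂ ht.1).continuousAt
      |>.continuousWithinAt)
    (fun t ht => ?_) (fun t ht => ?_)
  all_goals rw [interior_Icc] at ht
  · exact (hasDerivAt_rateDenom_div_gainRatio (hh₂.trans hh) hh₂ ht.1.le).hasDerivWithinAt
  · have hr₂ : γ (h₂ * t) < γ (h₂ * P) :=
      γ_lt_γ (by nlinarith [ht.1]) (mul_lt_mul_of_pos_left ht.2 hh₂)
    exact div_neg_of_neg_of_pos
      (neg_neg_of_pos (mul_pos (gainRatioDeriv_pos hh hh₂ ht.1.le) (sub_pos.2 hr₂)))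
      (pow_pos (gainRatio_pos (hh₂.trans hh) hh₂ ht.1.le) 2)

lemma rateDenom_self_div_gainRatio (hh₁ : 0 < h₁) (hh₂ : 0 < h₂) (hP : 0 ≤ P) :
    rateDenom h₁ h₂ P P / gainRatio h₁ h₂ P = γ (h₁ * P) := by
  have hg := (gainRatio_pos hh₁ hh₂ hP).ne'
  simp only [rateDenom, sub_self, zero_add]
  field_simp

end TangentCoefficients

theorem gbc_kappa_props (h₁ h₂ P : ℝ)
    (hh : h₂ < h₁) (hh₂ : 0 < h₂) (hP : 0 < P) :
    let g : ℝ → ℝ := fun P₁ => (1 / h₁ + P₁) / (1 / h₂ + P₁)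
    let r₁ : ℝ → ℝ := fun P₁ => γ (h₁ * P₁)
    let r₂ : ℝ → ℝ := fun P₁ => γ (h₂ * P) - γ (h₂ * P₁)
    let a₁ : ℝ → ℝ := fun P₁ => g P₁ / (r₂ P₁ + g P₁ * r₁ P₁)
    let a₂ : ℝ → ℝ := fun P₁ => 1 / (r₂ P₁ + g P₁ * r₁ P₁)
    let κ₁ : ℝ → ℝ := fun P₁ => 1 - a₂ P₁ * γ (h₂ * P)
    let κ₂ : ℝ → ℝ := fun P₁ => a₁ P₁ * γ (h₁ * P)
    StrictMonoOn κ₁ (Set.Icc 0 P) ∧ StrictMonoOn κ₂ (Set.Icc 0 P) ∧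
    ∀ P₁ ∈ Set.Icc (0 : ℝ) P,
      κ₁ P₁ ∈ Set.Ico (0 : ℝ) 1 ∧ κ₂ P₁ ∈ Set.Ioc (0 : ℝ) 1 := by
  intro g r₁ r₂ a₁ a₂ κ₁ κ₂
  set D := rateDenom h₁ h₂ P
  have hh₁ : 0 < h₁ := hh₂.trans hh
  have hC₁ : 0 < γ (h₁ * P) := γ_pos (mul_pos hh₁ hP)
  have hC₂ : 0 < γ (h₂ * P) := γ_pos (mul_pos hh₂ hP)
  have hD : ∀ t ∈ Icc 0 P, 0 < D t := fun t ht => rateDenom_pos hh₁ hh₂ hP ht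
  have hDg : ∀ t ∈ Icc 0 P, 0 < D t / gainRatio h₁ h₂ t :=
    fun t ht => div_pos (hD t ht) (gainRatio_pos hh₁ hh₂ ht.1)
  have eκ₁ : κ₁ = fun t => 1 - γ (h₂ * P) / D t := funext fun t => by
    simp only [κ₁, a₂, g, r₁, r₂, D, rateDenom, gainRatio]; ring
  have eκ₂ : κ₂ = fun t => γ (h₁ * P) / (D t / gainRatio h₁ h₂ t) := funext fun t => by
    rw [div_div_eq_mul_div]; simp only [κ₂, a₁, g, r₁, r₂, D, rateDenom, gainRatio]; ring
  have hD_mono : StrictMonoOn D (Icc 0 P) :=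
    (rateDenom_strictMonoOn hh hh₂).mono Icc_subset_Ici_self
  have hκ₁ : StrictMonoOn κ₁ (Icc 0 P) := eκ₁ ▸ fun a ha b hb hab =>
    sub_lt_sub_left (hD_mono.const_div_strictAntiOn hD hC₂ ha hb hab) 1
  have hκ₂ : StrictMonoOn κ₂ (Icc 0 P) :=
    eκ₂ ▸ (rateDenom_div_gainRatio_strictAntiOn hh hh₂).const_div_strictMonoOn hDg hC₁
  have hκ₁0 : κ₁ 0 = 0 := by rw [eκ₁]; simp only [D, rateDenom_zero, div_self hC₂.ne', sub_self]
  have hκ₂P : κ₂ P = 1 := by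
    rw [eκ₂]; simp only [D, rateDenom_self_div_gainRatio hh₁ hh₂ hP.le, div_self hC₁.ne']
  refine ⟨hκ₁, hκ₂, fun t ht => ⟨⟨?_, ?_⟩, ?_, ?_⟩⟩
  · exact hκ₁0 ▸ hκ₁.monotoneOn (left_mem_Icc.2 hP.le) ht ht.1
  · rw [eκ₁]; exact sub_lt_self 1 (div_pos hC₂ (hD t ht))
  · rw [eκ₂]; exact div_pos hC₁ (hDg t ht)
  · exact hκ₂P ▸ hκ₂.monotoneOn ht (right_mem_Icc.2 hP.le) ht.2
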